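/- Let m be a positive integer. For every positive integer n with n > (L_{2m} + F_{2m}² − 1)³, if σ₂(n) − n² = L_{2m}·n − F_{2m}² + 1 (as integers), then either there exists an integer k ≥ 0 such that n = F_{2k+1} · F_{2k+2m+1} with both F_{2k+1} and F_{2k+2m+1} prime, or there exists an integer k with 0 ≤ k < m and m ≠ 2k+1 such that n = F_{2k+1} · F_{2m−2k−1} with both F_{2k+1} and F_{2m−2k−1} prime. -/
import Mathlib


/-- The Lucas numbers: `L 0 = 2`, `L 1 = 1`, `L (n+2) = L (n+1) + L n`. -/
def lucasNum : ℕ → ℕ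
  | 0 => 2
  | 1 => 1
  | n + 2 => lucasNum (n + 1) + lucasNum n

lemma lucasNum_add_two (n : ℕ) : lucasNum (n+2) = lucasNum (n+1) + lucasNum n := rfl

lemma lem1 : ∀ n, 2 * Nat.fib (n+1) = Nat.fib n + lucasNum n ∧
    2 * lucasNum (n+1) = lucasNum n + 5 * Nat.fib n := by
  intro n
  induction n with
  | zero => simp [lucasNum]
  | succ k ih =>
    obtain ⟨h1, h2⟩ := ih
    have hf : Nat.fib (k+1+1) = Nat.fib k + Nat.fib (k+1) := Nat.fib_add_two
    have hl : lucasNum (k+1+1) = lucasNum (k+1) + lucasNum k := lucasNum_add_two k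
    constructor <;> omega

lemma lucasNum_pos : ∀ n, 0 < lucasNum n := by
  intro n
  induction n using Nat.twoStepInduction with
  | zero => decide
  | one => decide
  | more k h1 h2 => rw [lucasNum_add_two]; omega

lemma lucasNum_ge_three (n : ℕ) : 3 ≤ lucasNum (n+2) := by
  induction n with
  | zero => decide
  | succ k ih =>
    have hl : lucasNum (k+1+2) = lucasNum (k+2) + lucasNum (k+1) := lucasNum_add_two (k+1)
    have := lucasNum_pos (k+1)
    omega

lemma lem2 : ∀ n, (lucasNum n : ℤ)^2 = 5 * (Nat.fib n : ℤ)^2 + 4 * (-1)^n := by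
  intro n
  induction n with
  | zero => simp [lucasNum]
  | succ k ih =>
    obtain ⟨h1, h2⟩ := lem1 k
    have h1' : (2 : ℤ) * Nat.fib (k+1) = Nat.fib k + lucasNum k := by exact_mod_cast h1
    have h2' : (2 : ℤ) * lucasNum (k+1) = lucasNum k + 5 * Nat.fib k := by exact_mod_cast h2
    have key : (4:ℤ) * (lucasNum (k+1):ℤ)^2 = 4 * (5 * (Nat.fib (k+1):ℤ)^2 + 4 * (-1)^(k+1)) := by
      rw [pow_succ]
      linear_combination (2*(lucasNum (k+1):ℤ) + (lucasNum k:ℤ) + 5*(Nat.fib k:ℤ)) * h2'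
        - 5*(2*(Nat.fib (k+1):ℤ) + (Nat.fib k:ℤ) + (lucasNum k:ℤ)) * h1' - 4*ih
    linarith

lemma lem4 (a : ℕ) : ∀ b, 2 * Nat.fib (a+b) = Nat.fib a * lucasNum b + lucasNum a * Nat.fib b := by
  intro b
  induction b using Nat.twoStepInduction with
  | zero => simp [lucasNum]; ring
  | one =>
    obtain ⟨h1, _⟩ := lem1 a
    simp only [lucasNum, Nat.fib_one, mul_one]
    omega
  | more k ih1 ih2 =>
    have hf : Nat.fib (a+(k+2)) = Nat.fib (a+k) + Nat.fib (a+k+1) := by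
      rw [show a+(k+2) = (a+k)+2 by ring]; exact Nat.fib_add_two
    have hl : lucasNum (k+2) = lucasNum (k+1) + lucasNum k := lucasNum_add_two k
    have hf2 : Nat.fib (k+2) = Nat.fib k + Nat.fib (k+1) := Nat.fib_add_two
    rw [show a+(k+1) = a+k+1 by ring] at ih2
    rw [hf, hl, hf2]
    ring_nf
    ring_nf at ih1 ih2
    linarith

lemma lem5 (a : ℕ) : ∀ c, (Nat.fib (a+c) : ℤ) * lucasNum a - (lucasNum (a+c) : ℤ) * Nat.fib a
    = 2 * (-1)^a * Nat.fib c := by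
  have base1 : (Nat.fib (a+1) : ℤ) * lucasNum a - (lucasNum (a+1) : ℤ) * Nat.fib a = 2 * (-1)^a := by
    obtain ⟨h1, h2⟩ := lem1 a
    have h1' : (2 : ℤ) * Nat.fib (a+1) = Nat.fib a + lucasNum a := by exact_mod_cast h1
    have h2' : (2 : ℤ) * lucasNum (a+1) = lucasNum a + 5 * Nat.fib a := by exact_mod_cast h2
    have l2 := lem2 a
    have key : (4:ℤ) * ((Nat.fib (a+1) : ℤ) * lucasNum a - (lucasNum (a+1) : ℤ) * Nat.fib a)
        = 8 * (-1)^a := by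
      linear_combination 2*(lucasNum a:ℤ)*h1' - 2*(Nat.fib a:ℤ)*h2' + 2*l2
    linarith
  intro c
  induction c using Nat.twoStepInduction with
  | zero => simp [mul_comm]
  | one => simpa using base1
  | more k ih1 ih2 =>
    have hf : Nat.fib (a+(k+2)) = Nat.fib (a+k) + Nat.fib (a+k+1) := by
      rw [show a+(k+2) = (a+k)+2 by ring]; exact Nat.fib_add_two
    have hl : lucasNum (a+(k+2)) = lucasNum (a+k+1) + lucasNum (a+k) := by
      rw [show a+(k+2) = (a+k)+2 by ring]; exact lucasNum_add_two (a+k)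
    have hf2 : Nat.fib (k+2) = Nat.fib k + Nat.fib (k+1) := Nat.fib_add_two
    rw [show a+(k+1) = a+k+1 by ring] at ih2
    rw [hf, hl, hf2]
    push_cast
    linarith

lemma lem3 : ∀ x : ℕ, ∀ s : ℕ, 0 < x → s^2 + 4 = 5 * x^2 →
    ∃ j, x = Nat.fib (2*j+1) ∧ s = lucasNum (2*j+1) := by
  intro x
  induction x using Nat.strong_induction_on with
  | _ x ih =>
    intro s hx hs
    rcases Nat.lt_or_ge x 2 with h2 | h2
    · interval_cases x
      · norm_num at hs
        have h : s = 1 := by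
          have := Nat.pos_of_ne_zero (n := s) (by rintro rfl; simp at hs)
          nlinarith
        exact ⟨0, by simp, by rw [h]; rfl⟩
    · -- parity of s
      have hx2 : 1 ≤ x^2 := Nat.one_le_iff_ne_zero.mpr (by positivity)
      have hpar : s % 2 = x % 2 := by
        have hsm := Nat.pow_mod s 2 2
        have hxm := Nat.pow_mod x 2 2
        rcases Nat.mod_two_eq_zero_or_one s with h | h <;>
          rcases Nat.mod_two_eq_zero_or_one x with h' | h' <;>
          simp [h, h'] at hsm hxm <;> omega
      -- s ≥ x + 1
      have hsx : x < s := by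
        have h1 : x^2 < s^2 := by nlinarith
        exact lt_of_pow_lt_pow_left₀ 2 (Nat.zero_le s) h1
      -- s < 3x
      have hs3 : s < 3*x := by
        have h1 : s^2 < (3*x)^2 := by nlinarith
        exact lt_of_pow_lt_pow_left₀ 2 (by positivity) h1
      have hs3' : s ≤ 3*x - 2 := by omega
      -- 5x ≤ 3s
      have h53 : 5*x ≤ 3*s := by
        by_contra h
        push_neg at h
        nlinarith
      set x' := (3*x - s)/2 with hx'def
      set s' := (3*s - 5*x)/2 with hs'def
      have hx'2 : 2*x' = 3*x - s := by omega
      have hs'2 : 2*s' = 3*s - 5*x := by omega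
      have hx'2' : 2*x' + s = 3*x := by omega
      have hs'2' : 2*s' + 5*x = 3*s := by omega
      have hx'pos : 0 < x' := by omega
      have hx'lt : x' < x := by omega
      -- invariant
      have hinv : s'^2 + 4 = 5 * x'^2 := by
        have a1 : (2:ℤ)*x' + s = 3*x := by exact_mod_cast hx'2'
        have a2 : (2:ℤ)*s' + 5*x = 3*s := by exact_mod_cast hs'2'
        have a3 : ((s:ℤ))^2 + 4 = 5*((x:ℤ))^2 := by exact_mod_cast hs
        have key : 4*((s':ℤ))^2 + 16 = 20*((x':ℤ))^2 := by
          linear_combination (2*(s':ℤ)-5*(x:ℤ)+3*(s:ℤ))*a2 - 5*(2*(x':ℤ)-(s:ℤ)+3*(x:ℤ))*a1 + 4*a3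
        have key' : 4*(s'^2) + 16 = 20*(x'^2) := by exact_mod_cast key
        omega
      obtain ⟨j, hj1, hj2⟩ := ih x' hx'lt s' hx'pos hinv
      refine ⟨j+1, ?_, ?_⟩
      · -- x = fib (2(j+1)+1) = fib (2j+3)
        obtain ⟨g1, g2⟩ := lem1 (2*j+1)
        have hfib : Nat.fib (2*j+1+2) = Nat.fib (2*j+1) + Nat.fib (2*j+1+1) := Nat.fib_add_two
        have : 2*x = 3*x' + s' := by omega
        have e : 2*(j+1)+1 = 2*j+1+2 := by ring
        rw [e]
        omega
      · obtain ⟨g1, g2⟩ := lem1 (2*j+1)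
        have hluc : lucasNum (2*j+1+2) = lucasNum (2*j+1+1) + lucasNum (2*j+1) := lucasNum_add_two _
        have : 2*s = 3*s' + 5*x' := by omega
        have e : 2*(j+1)+1 = 2*j+1+2 := by ring
        rw [e]
        omega

set_option maxHeartbeats 1000000 in
theorem stmt_13 (m : ℕ) (hm : 1 ≤ m) (n : ℕ) (hn : 0 < n)
    (hbig : (n : ℤ) > ((lucasNum (2 * m) : ℤ) + (Nat.fib (2 * m) : ℤ) ^ 2 - 1) ^ 3)
    (heq : ((ArithmeticFunction.sigma 2) n : ℤ) - (n : ℤ) ^ 2 =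
      (lucasNum (2 * m) : ℤ) * n - (Nat.fib (2 * m) : ℤ) ^ 2 + 1) :
    (∃ k : ℕ, n = Nat.fib (2 * k + 1) * Nat.fib (2 * k + 2 * m + 1) ∧
      (Nat.fib (2 * k + 1)).Prime ∧ (Nat.fib (2 * k + 2 * m + 1)).Prime) ∨
    (∃ k : ℕ, k < m ∧ m ≠ 2 * k + 1 ∧
      n = Nat.fib (2 * k + 1) * Nat.fib (2 * m - (2 * k + 1)) ∧
      (Nat.fib (2 * k + 1)).Prime ∧ (Nat.fib (2 * m - (2 * k + 1))).Prime) := by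
  set L : ℕ := lucasNum (2 * m) with hLdef
  set F : ℕ := Nat.fib (2 * m) with hFdef
  set B : ℤ := (L : ℤ) + (F : ℤ)^2 - 1 with hBdef
  have hL3 : 3 ≤ L := by
    obtain ⟨m', rfl⟩ : ∃ m', m = m' + 1 := ⟨m - 1, by omega⟩
    rw [hLdef, show 2 * (m' + 1) = 2 * m' + 2 by ring]
    exact lucasNum_ge_three _
  have hF1 : 1 ≤ F := Nat.fib_pos.mpr (by omega)
  have hL3' : (3 : ℤ) ≤ (L : ℤ) := by exact_mod_cast hL3
  have hF1' : (1 : ℤ) ≤ (F : ℤ) := by exact_mod_cast hF1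
  have hF2ge1 : (1 : ℤ) ≤ (F : ℤ)^2 := by nlinarith only [hF1']
  have hB3 : (3 : ℤ) ≤ B := by rw [hBdef]; linarith only [hL3', hF2ge1]
  have h9 : (9 : ℤ) ≤ B^2 := by nlinarith only [hB3]
  have hBcube : B ≤ B^3 := by nlinarith only [h9, hB3]
  have h27 : (27 : ℤ) ≤ B^3 := by nlinarith only [h9, hB3]
  have hnB : B < (n : ℤ) := by linarith only [hbig, hBcube]
  have hn27 : (27 : ℤ) < (n : ℤ) := by linarith only [hbig, h27]
  have hn2 : 2 ≤ n := by exact_mod_cast (by linarith only [hn27] : (2:ℤ) ≤ (n:ℤ))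
  have hn0' : (0 : ℤ) ≤ (n : ℤ) := by positivity
  have hF2B : ((F : ℤ))^2 ≤ B - 2 := by rw [hBdef]; linarith only [hL3']
  have hnLn : (n : ℤ) ≤ (L : ℤ) * n := le_mul_of_one_le_left hn0' (by linarith only [hL3'])
  -- n is not prime
  have hnotprime : ¬ n.Prime := by
    intro hp
    have hd : (ArithmeticFunction.sigma 2) n = 1 + n ^ 2 := by
      rw [ArithmeticFunction.sigma_apply, hp.divisors,
        Finset.sum_pair (Nat.Prime.one_lt hp).ne]
      norm_num
    rw [hd] at heq
    push_cast at heq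
    have hLn : (L : ℤ) * n = (F : ℤ)^2 := by linarith only [heq]
    linarith only [hLn, hF2B, hnB, hnLn]
  -- factor n = p * q
  set p : ℕ := n.minFac with hpdef
  have hp : p.Prime := Nat.minFac_prime (by omega)
  set q : ℕ := n / p with hqdef
  have hpq : p * q = n := Nat.mul_div_cancel' n.minFac_dvd
  have hp2 : 2 ≤ p := hp.two_le
  have hq0 : 0 < q := by
    rcases Nat.eq_zero_or_pos q with h | h
    · rw [h, mul_zero] at hpq; omega
    · exact h
  have hq1 : q ≠ 1 := by
    intro h
    rw [h, mul_one] at hpq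
    exact hnotprime (hpq ▸ hp)
  have hq2 : 2 ≤ q := by omega
  have hqdvd : q ∣ n := Dvd.intro_left p hpq
  have hqltn : q < n := by rw [hqdef]; exact Nat.div_lt_self (by omega) hp.one_lt
  -- lower bound on sigma
  have h1mem : (1 : ℕ) ∈ n.divisors := Nat.one_mem_divisors.mpr (by omega)
  have hqmem : q ∈ n.divisors := Nat.mem_divisors.mpr ⟨hqdvd, by omega⟩
  have hnmem : n ∈ n.divisors := Nat.mem_divisors_self n (by omega)
  have hsub : ({1, q, n} : Finset ℕ) ⊆ n.divisors := by
    rw [Finset.insert_subset_iff, Finset.insert_subset_iff, Finset.singleton_subset_iff]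
    exact ⟨h1mem, hqmem, hnmem⟩
  have hlow : 1 + q ^ 2 + n ^ 2 ≤ (ArithmeticFunction.sigma 2) n := by
    rw [ArithmeticFunction.sigma_apply]
    have h1 : ∑ d ∈ ({1, q, n} : Finset ℕ), d ^ 2 = 1 + q ^ 2 + n ^ 2 := by
      rw [Finset.sum_insert (by simp only [Finset.mem_insert, Finset.mem_singleton]; omega),
        Finset.sum_pair (by omega : q ≠ n)]
      ring
    rw [← h1]
    exact Finset.sum_le_sum_of_subset hsub
  have hq2F : ((q : ℤ))^2 + (F : ℤ)^2 ≤ (L : ℤ) * n := by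
    have hl : ((1 + q ^ 2 + n ^ 2 : ℕ) : ℤ) ≤ ((ArithmeticFunction.sigma 2) n : ℤ) := by
      exact_mod_cast hlow
    push_cast at hl
    linarith only [hl, heq]
  -- bounds on p
  have hpq' : ((p : ℤ)) * q = (n : ℤ) := by exact_mod_cast hpq
  have hq0' : (0 : ℤ) < q := by exact_mod_cast hq0
  have hp0' : (0 : ℤ) < p := by exact_mod_cast hp.pos
  have hLB : (L : ℤ) ≤ B := by rw [hBdef]; linarith only [hF2ge1]
  have hLnBpq : (L : ℤ) * n ≤ B * ((p:ℤ) * q) := by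
    rw [← hpq']
    exact mul_le_mul_of_nonneg_right hLB (by positivity)
  have hqBp : (q : ℤ) < B * p := by
    have h1 : (q : ℤ) * q < (B * p) * q := by linarith only [hq2F, hLnBpq, hF2ge1]
    exact lt_of_mul_lt_mul_right h1 (le_of_lt hq0')
  have hnBp2 : (n : ℤ) < B * (p:ℤ)^2 := by
    have h1 : (p:ℤ) * q < (p:ℤ) * (B * p) := mul_lt_mul_of_pos_left hqBp hp0'
    linarith only [h1, hpq']
  have hBp : B < (p : ℤ) := by
    have h1 : B * B^2 < B * (p:ℤ)^2 := by linarith only [hbig, hnBp2]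
    have h2 : B^2 < (p:ℤ)^2 := lt_of_mul_lt_mul_left h1 (by linarith only [hB3])
    by_contra hcon
    push_neg at hcon
    have := pow_le_pow_left₀ (by positivity) hcon 2
    linarith only [h2, this]
  have hnp3 : (n : ℤ) < (p : ℤ)^3 := by
    have h1 : B * (p:ℤ)^2 < (p:ℤ) * (p:ℤ)^2 := mul_lt_mul_of_pos_right hBp (by positivity)
    linarith only [h1, hnBp2]
  have hqp2 : q < p ^ 2 := by
    have h1 : (p:ℤ) * q < (p:ℤ) * (p:ℤ)^2 := by linarith only [hnp3, hpq']
    have h2 : (q:ℤ) < (p:ℤ)^2 := lt_of_mul_lt_mul_left h1 (le_of_lt hp0')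
    exact_mod_cast h2
  have hpleq : p ≤ q := Nat.minFac_le_of_dvd hq2 hqdvd
  have hqprime : q.Prime := by
    by_contra hnq
    have hr : q.minFac.Prime := Nat.minFac_prime hq1
    have hrq : q.minFac ∣ q := Nat.minFac_dvd q
    have hqq : q.minFac * (q / q.minFac) = q := Nat.mul_div_cancel' hrq
    have hqr1 : q / q.minFac ≠ 1 := by
      intro h
      rw [h, mul_one] at hqq
      exact hnq (hqq ▸ hr)
    have hqr0 : q / q.minFac ≠ 0 := by
      intro h
      rw [h, mul_zero] at hqq
      omega
    have hd1 : p ≤ q.minFac := Nat.minFac_le_of_dvd hr.two_le (hrq.trans hqdvd)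
    have hd2 : p ≤ q / q.minFac := by
      have hdvd2 : (q / q.minFac) ∣ n := (Nat.div_dvd_of_dvd hrq).trans hqdvd
      have h1 := Nat.minFac_le_of_dvd (m := (q / q.minFac).minFac)
        ((Nat.minFac_prime hqr1).two_le) ((Nat.minFac_dvd _).trans hdvd2)
      have h2 := Nat.minFac_le (Nat.pos_of_ne_zero hqr0)
      omega
    have hple : p * p ≤ q := by rw [← hqq]; exact Nat.mul_le_mul hd1 hd2
    have hlt : q < p * p := by rw [← pow_two]; exact hqp2
    omega
  rcases eq_or_lt_of_le hpleq with heqq | hplt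
  · -- p = q : n = p^2, contradiction
    exfalso
    have hn4 : n = p ^ 2 := by rw [← hpq, ← heqq]; ring
    have hd : (ArithmeticFunction.sigma 2) n = 1 + p ^ 2 + p ^ 4 := by
      rw [hn4, ArithmeticFunction.sigma_apply, Nat.divisors_prime_pow hp,
        Finset.sum_map]
      simp [Finset.sum_range_succ]
      ring
    rw [hd] at heq
    push_cast at heq
    have hnn : ((n : ℤ)) = ((p : ℤ))^2 := by exact_mod_cast hn4
    have e4 : ((p : ℤ))^4 = ((n : ℤ))^2 := by rw [hnn]; ring
    have h3n : 3 * (n:ℤ) ≤ (L:ℤ) * n := mul_le_mul_of_nonneg_right hL3' hn0'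
    linarith only [heq, hnn, e4, h3n, hF2B, hnB, hn27]
  · -- p < q : n = p * q with p < q primes
    have hcop : Nat.Coprime p q := (Nat.coprime_primes hp hqprime).mpr (by omega)
    have hd : (ArithmeticFunction.sigma 2) n = (1 + p ^ 2) * (1 + q ^ 2) := by
      rw [← hpq, ArithmeticFunction.isMultiplicative_sigma.map_mul_of_coprime hcop,
        ArithmeticFunction.sigma_apply, ArithmeticFunction.sigma_apply,
        hp.divisors, hqprime.divisors,
        Finset.sum_pair (Nat.Prime.one_lt hp).ne,
        Finset.sum_pair (Nat.Prime.one_lt hqprime).ne]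
      ring
    rw [hd] at heq
    push_cast at heq
    rw [← hpq'] at heq
    have hmain : ((p : ℤ))^2 + (q : ℤ)^2 + (F : ℤ)^2 = (L : ℤ) * p * q := by
      linarith only [heq]
    -- Pell step
    have hL2 : ((L : ℤ))^2 = 5 * ((F : ℤ))^2 + 4 := by
      have h := lem2 (2 * m)
      rw [← hLdef, ← hFdef] at h
      have he : ((-1 : ℤ))^(2*m) = 1 := by
        rw [pow_mul]; norm_num
      rw [he] at h
      linarith only [h]
    have ht : (2 * (q : ℤ) - L * p)^2 = (F : ℤ)^2 * (5 * (p:ℤ)^2 - 4) := by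
      linear_combination (4:ℤ) * hmain + ((p:ℤ))^2 * hL2
    have hFdvd : (F : ℤ) ∣ (2 * (q : ℤ) - L * p) := by
      rw [← Int.pow_dvd_pow_iff (two_ne_zero), ht]
      exact Dvd.intro _ rfl
    obtain ⟨u, hu⟩ := hFdvd
    have hu2 : u ^ 2 = 5 * (p:ℤ)^2 - 4 := by
      have hF0 : ((F:ℤ))^2 ≠ 0 := by positivity
      have h : (F:ℤ)^2 * u^2 = (F:ℤ)^2 * (5 * (p:ℤ)^2 - 4) := by
        rw [← ht, hu]; ring
      exact mul_left_cancel₀ hF0 h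
    set s : ℕ := u.natAbs with hsdef
    have hs2 : (s:ℤ)^2 = 5 * (p:ℤ)^2 - 4 := by
      rw [hsdef, Int.natCast_natAbs, sq_abs]
      exact hu2
    have hsnat : s ^ 2 + 4 = 5 * p ^ 2 := by
      have h : ((s ^ 2 + 4 : ℕ) : ℤ) = ((5 * p ^ 2 : ℕ) : ℤ) := by push_cast; linarith only [hs2]
      exact_mod_cast h
    obtain ⟨j, hj1, hj2⟩ := lem3 p s hp.pos hsnat
    have hj1' : ((p:ℕ) : ℤ) = (Nat.fib (2*j+1) : ℤ) := by exact_mod_cast hj1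
    have hj2' : ((s:ℕ) : ℤ) = (lucasNum (2*j+1) : ℤ) := by exact_mod_cast hj2
    rcases Int.natAbs_eq u with hcase | hcase
    · -- u = s : family 1
      left
      have h2q : 2 * (q:ℤ) = (L:ℤ) * p + (F:ℤ) * s := by
        rw [hcase] at hu
        rw [← hsdef] at hu
        linarith only [hu]
      have hlem4 := lem4 (2*j+1) (2*m)
      have hlem4' : (2:ℤ) * Nat.fib (2*j+1+2*m)
          = (Nat.fib (2*j+1) : ℤ) * L + (lucasNum (2*j+1) : ℤ) * F := by
        exact_mod_cast hlem4
      have hqfib : (q : ℤ) = (Nat.fib (2*j+1+2*m) : ℤ) := by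
        rw [← hj1', ← hj2'] at hlem4'
        linarith only [h2q, hlem4']
      have hqfibn : q = Nat.fib (2*j+2*m+1) := by
        rw [show 2*j+2*m+1 = 2*j+1+2*m by ring]
        exact_mod_cast hqfib
      exact ⟨j, by rw [← hpq, hj1, hqfibn], hj1 ▸ hp, hqfibn ▸ hqprime⟩
    · -- u = -s : family 2 or contradiction
      have h2q : 2 * (q:ℤ) = (L:ℤ) * p - (F:ℤ) * s := by
        rw [hcase] at hu
        rw [← hsdef] at hu
        linarith only [hu]
      rcases Nat.lt_or_ge (2*j+1) (2*m) with hjm | hjm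
      · -- family 2
        right
        have hc : (2*j+1) + (2*m - (2*j+1)) = 2*m := by omega
        have hlem5 := lem5 (2*j+1) (2*m - (2*j+1))
        rw [hc] at hlem5
        have hodd : ((-1 : ℤ))^(2*j+1) = -1 := Odd.neg_one_pow ⟨j, by ring⟩
        rw [hodd] at hlem5
        rw [← hLdef, ← hFdef, ← hj1', ← hj2'] at hlem5
        have hqfib : (q : ℤ) = (Nat.fib (2*m - (2*j+1)) : ℤ) := by
          linarith only [h2q, hlem5]
        have hqfibn : q = Nat.fib (2*m - (2*j+1)) := by exact_mod_cast hqfib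
        refine ⟨j, by omega, ?_, by rw [← hpq, hj1, hqfibn], hj1 ▸ hp, hqfibn ▸ hqprime⟩
        intro hmeq
        have : 2*m - (2*j+1) = 2*j+1 := by omega
        rw [this, ← hj1] at hqfibn
        omega
      · -- contradiction: q ≤ p
        exfalso
        have hc : 2*m + (2*j+1 - 2*m) = 2*j+1 := by omega
        have hlem5 := lem5 (2*m) (2*j+1 - 2*m)
        rw [hc] at hlem5
        have he : ((-1 : ℤ))^(2*m) = 1 := by rw [pow_mul]; norm_num
        rw [he] at hlem5
        rw [← hLdef, ← hFdef, ← hj1', ← hj2'] at hlem5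
        have hqfib : (q : ℤ) = (Nat.fib (2*j+1 - 2*m) : ℤ) := by
          linarith only [h2q, hlem5]
        have hqfibn : q = Nat.fib (2*j+1 - 2*m) := by exact_mod_cast hqfib
        have hmono : Nat.fib (2*j+1 - 2*m) ≤ Nat.fib (2*j+1) := Nat.fib_mono (by omega)
        rw [← hj1] at hmono
        omega
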